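/- Let θ: ℝ → ℝ be a measurable nonnegative weight function, let I : ℝ → ℝ be integrable, let n ≥ 2, and let t₁, …, tₙ ∈ ℝ. Define I_i(t) = I(t − t_i) for i = 1, …, n. Then the Gram matrix [ρ(I_i, I_j)]_{i,j=1}^{n} of the SpeD correlation is the n × n matrix of all ones, and consequently there exist coefficients c₁, …, cₙ ∈ ℝ, not all zero, with ∑_{i=1}^{n} ∑_{j=1}^{n} c_i c_j ρ(I_i, I_j) = 0; i.e., the SpeD correlation function is not strictly positive-definite. -/

import Mathlib

open MeasureTheory Real

/-- The Fourier transform of a real-valued function `I : ℝ → ℝ`,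
`Î(ξ) = ∫ I(t) e^{−2πi t ξ} dt`. -/
noncomputable def fourierOfReal (I : ℝ → ℝ) : ℝ → ℂ :=
  FourierTransform.fourier (fun t => (I t : ℂ))

/-- The SpeD correlation of two real integrable functions,
`ρ(I₁, I₂) = exp(−∫ θ(ξ)(|Î₁(ξ)| − |Î₂(ξ)|)² dξ)`. -/
noncomputable def speDCorr (θ : ℝ → ℝ) (I₁ I₂ : ℝ → ℝ) : ℝ :=
  Real.exp (-∫ ξ, θ ξ *
    (‖fourierOfReal I₁ ξ‖ - ‖fourierOfReal I₂ ξ‖) ^ 2)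

/-! Translating `I` multiplies `Î` by a unimodular phase, so `|Î_i| = |Î|` for every `i` and each
`ρ(I_i, I_j)` is `exp 0 = 1`. The all-ones Gram matrix has rank one, so any nonzero `c` with
`∑ cᵢ = 0`, e.g. `e₁ - e₂`, gives `∑ᵢ∑ⱼ cᵢ cⱼ ρ(I_i, I_j) = (∑ cᵢ)² = 0`. -/

open scoped FourierTransform

theorem Real.norm_fourier_comp_sub_right {V E : Type*} [NormedAddCommGroup V]
    [InnerProductSpace ℝ V] [MeasurableSpace V] [BorelSpace V] [FiniteDimensional ℝ V]
    [NormedAddCommGroup E] [NormedSpace ℂ E] (f : V → E) (a w : V) :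
    ‖𝓕 (fun v => f (v - a)) w‖ = ‖𝓕 f w‖ := by
  have h := congrFun
    (VectorFourier.fourierIntegral_comp_add_right 𝐞 volume (innerₗ V) f (-a)) w
  simp only [Function.comp_def, ← sub_eq_add_neg] at h
  exact (congrArg (‖·‖) h).trans (Circle.norm_smul _ _)

lemma norm_fourierOfReal_comp_sub_right (I : ℝ → ℝ) (a ξ : ℝ) :
    ‖fourierOfReal (fun s => I (s - a)) ξ‖ = ‖fourierOfReal I ξ‖ :=
  Real.norm_fourier_comp_sub_right (fun t => (I t : ℂ)) a ξ

lemma speDCorr_eq_one_of_norm_fourierOfReal_eq (θ : ℝ → ℝ) {I₁ I₂ : ℝ → ℝ}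
    (h : ∀ ξ, ‖fourierOfReal I₁ ξ‖ = ‖fourierOfReal I₂ ξ‖) : speDCorr θ I₁ I₂ = 1 := by
  simp [speDCorr, h]

lemma speDCorr_comp_sub_right (θ I : ℝ → ℝ) (a b : ℝ) :
    speDCorr θ (fun s => I (s - a)) (fun s => I (s - b)) = 1 :=
  speDCorr_eq_one_of_norm_fourierOfReal_eq θ fun ξ => by
    rw [norm_fourierOfReal_comp_sub_right, norm_fourierOfReal_comp_sub_right]

lemma exists_ne_zero_sum_eq_zero (ι R : Type*) [Fintype ι] [Nontrivial ι] [Ring R]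
    [Nontrivial R] : ∃ c : ι → R, c ≠ 0 ∧ ∑ i, c i = 0 := by
  classical
  obtain ⟨i, j, hij⟩ := exists_pair_ne ι
  refine ⟨Pi.single i 1 - Pi.single j 1, fun h => ?_, ?_⟩
  · simpa [hij] using congrFun h i
  · simp [Finset.sum_sub_distrib]

theorem speD_not_strictly_positive_definite_general
    (θ : ℝ → ℝ)
    (I : ℝ → ℝ) (n : ℕ) (hn : 2 ≤ n) (t : Fin n → ℝ) :
    (∀ i j, speDCorr θ (fun s => I (s - t i)) (fun s => I (s - t j)) = 1) ∧
      ∃ c : Fin n → ℝ, c ≠ 0 ∧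
        ∑ i, ∑ j, c i * c j *
          speDCorr θ (fun s => I (s - t i)) (fun s => I (s - t j)) = 0 := by
  have hρ i j := speDCorr_comp_sub_right θ I (t i) (t j)
  have : Nontrivial (Fin n) := Fin.nontrivial_iff_two_le.mpr hn
  obtain ⟨c, hc, hsum⟩ := exists_ne_zero_sum_eq_zero (Fin n) ℝ
  refine ⟨hρ, c, hc, ?_⟩
  simp only [hρ, mul_one, ← Finset.sum_mul_sum, hsum, zero_mul]

/-- For translated copies `I_i(t) = I(t − t_i)` of a single integrable function, the Gram
matrix of the SpeD correlation is the matrix of all ones, and consequently there exist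
coefficients `c`, not all zero, with `∑ᵢ∑ⱼ cᵢ cⱼ ρ(I_i, I_j) = 0`: the SpeD correlation is
not strictly positive-definite. -/
theorem speD_not_strictly_positive_definite
    (θ : ℝ → ℝ) (hθ_meas : Measurable θ) (hθ_nonneg : ∀ ξ, 0 ≤ θ ξ)
    (I : ℝ → ℝ) (hI : Integrable I) (n : ℕ) (hn : 2 ≤ n) (t : Fin n → ℝ) :
    (∀ i j, speDCorr θ (fun s => I (s - t i)) (fun s => I (s - t j)) = 1) ∧
      ∃ c : Fin n → ℝ, c ≠ 0 ∧
        ∑ i, ∑ j, c i * c j *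
          speDCorr θ (fun s => I (s - t i)) (fun s => I (s - t j)) = 0 :=
  speD_not_strictly_positive_definite_general θ I n hn t
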